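/- arXiv:1007.3049 — 5 statements merged into one kernel-verified Lean document; each statement's English description precedes it below -/
import Mathlib

section
/- For every n ≥ 2, the tournament T_{2n+1} is indecomposable. -/
/-!
Let `I` be an interval with two vertices. Some arc `a → b` lies inside `I`, and then `a + 1 ∈ I`,
since `a → a + 1 → b` and an interval contains every vertex lying on a path of length two
between two of its vertices. Once `x, x + 1 ∈ I`, the vertex `x + n + 1` lies on the path
`x + 1 → x + n + 1 → x`, so it is in `I`; the arc `x + 1 → x + n + 1` then gives `x + 2 ∈ I`.
Hence `I` contains `x + m` for every `m`, i.e. every vertex.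
-/

/-- A tournament on vertex type `V`, given by its arc relation. -/
def IsTournament {V : Type*} (r : V → V → Prop) : Prop :=
  (∀ x, ¬ r x x) ∧ ∀ x y : V, x ≠ y → (r x y ↔ ¬ r y x)

/-- `I` is an interval of the subtournament of `r` induced on `X`. -/
def IsIntervalOn {V : Type*} (r : V → V → Prop) (X I : Set V) : Prop :=
  I ⊆ X ∧ ∀ x ∈ X \ I, (∀ i ∈ I, r x i) ∨ (∀ i ∈ I, r i x)

/-- The subtournament induced on `X` is indecomposable: all its intervals are trivial. -/
def IndecomposableOn {V : Type*} (r : V → V → Prop) (X : Set V) : Prop :=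
  ∀ I : Set V, IsIntervalOn r X I → I = ∅ ∨ (∃ a, I = {a}) ∨ I = X

/-- The dual tournament, obtained by reversing all arcs. -/
def dual {V : Type*} (r : V → V → Prop) : V → V → Prop := fun x y => r y x

/-- `s` embeds into `r`: `s` is isomorphic to an induced subtournament of `r`. -/
def Embeds {W V : Type*} (s : W → W → Prop) (r : V → V → Prop) : Prop :=
  ∃ f : W → V, Function.Injective f ∧ ∀ a b, s a b ↔ r (f a) (f b)

/-- The 3-cycle C₃. -/
def C3 : ZMod 3 → ZMod 3 → Prop := fun i j => j = i + 1

/-- The critical tournament `T_{2n+1}` on `ZMod (2n+1)`: arc `i → j` iff `j - i ∈ {1,…,n}`. -/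
def Tt (n : ℕ) : ZMod (2*n+1) → ZMod (2*n+1) → Prop :=
  fun i j => (j - i).val ∈ Finset.Icc 1 n

/-- The critical tournament `W_{2n+1}` on `Fin (2n+1)`:
`0 < 1 < ⋯ < 2n-1` and odds → `2n` → evens. -/
def Wt (n : ℕ) : Fin (2*n+1) → Fin (2*n+1) → Prop :=
  fun i j =>
    if i.val = 2*n then j.val % 2 = 0 ∧ j.val ≠ 2*n
    else if j.val = 2*n then i.val % 2 = 1
    else i.val < j.val

/-- The diamond `D₄`: `{0,1,2}` is a 3-cycle and `3 → {0,1,2}`. -/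
def D4 : Fin 4 → Fin 4 → Prop :=
  fun i j => (i = 3 ∧ j ≠ 3) ∨ (i ≠ 3 ∧ j ≠ 3 ∧ j.val = (i.val + 1) % 3)

/-- `U₅`: obtained from `T₅` by reversing the arc inside `{3,4}`. -/
def U5 : ZMod 5 → ZMod 5 → Prop :=
  fun i j =>
    if (i = 3 ∧ j = 4) ∨ (i = 4 ∧ j = 3) then Tt 2 j i else Tt 2 i j

/-- The tournament `F_{n+1}` on `{0,…,n}`: arc `i → j` iff `i+1 < j` or `i = j+1`. -/
def Ft (n : ℕ) : Fin (n+1) → Fin (n+1) → Prop :=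
  fun i j => i.val + 1 < j.val ∨ i.val = j.val + 1

/-- `Ext(X)`: vertices outside `X` extending `X` indecomposably. -/
def ExtSet {V : Type*} (r : V → V → Prop) (X : Set V) : Set V :=
  {x | x ∉ X ∧ IndecomposableOn r (X ∪ {x})}

/-- `[X]`: vertices outside `X` relating uniformly to `X`. -/
def BrSet {V : Type*} (r : V → V → Prop) (X : Set V) : Set V :=
  {x | x ∉ X ∧ ((∀ y ∈ X, r x y) ∨ (∀ y ∈ X, r y x))}

/-- `X(u)`: vertices `x` outside `X` such that `{u,x}` is an interval of `T(X ∪ {x})`. -/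
def XuSet {V : Type*} (r : V → V → Prop) (X : Set V) (u : V) : Set V :=
  {x | x ∉ X ∧ IsIntervalOn r (X ∪ {x}) {u, x}}

section Tournament

variable {V : Type*} {r : V → V → Prop}

theorem IsTournament.not_rel_of_rel (hr : IsTournament r) {x y : V} (h : r x y) : ¬ r y x :=
  (hr.2 x y fun e => hr.1 x (e ▸ h)).1 h

theorem IsTournament.rel_or_rel (hr : IsTournament r) {x y : V} (hxy : x ≠ y) :
    r x y ∨ r y x :=
  or_iff_not_imp_left.2 (hr.2 y x hxy.symm).2

theorem IsIntervalOn.mem_of_rel_of_rel (hr : IsTournament r) {X I : Set V}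
    (hI : IsIntervalOn r X I) {a b x : V} (ha : a ∈ I) (hb : b ∈ I) (hx : x ∈ X)
    (hax : r a x) (hxb : r x b) : x ∈ I := by
  by_contra hxI
  rcases hI.2 x ⟨hx, hxI⟩ with hxI' | hIx
  · exact hr.not_rel_of_rel hax (hxI' a ha)
  · exact hr.not_rel_of_rel hxb (hIx b hb)

end Tournament

section CircularTournament

variable {n : ℕ}

theorem Tt_isTournament (n : ℕ) : IsTournament (Tt n) := by
  refine ⟨fun x => by simp [Tt], fun x y hxy => ?_⟩
  have hne : y - x ≠ 0 := sub_ne_zero.2 hxy.symm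
  have : NeZero (y - x) := ⟨hne⟩
  have hneg : (x - y).val = 2 * n + 1 - (y - x).val := by
    rw [← neg_sub, ZMod.val_neg_of_ne_zero]
  have hpos : 0 < (y - x).val := ZMod.val_pos.2 hne
  have hlt : (y - x).val < 2 * n + 1 := ZMod.val_lt _
  simp only [Tt, Finset.mem_Icc, hneg]
  omega

theorem Tt_add_natCast (x : ZMod (2 * n + 1)) {k : ℕ} (hk : 1 ≤ k) (hkn : k ≤ n) :
    Tt n x (x + k) := by
  simp only [Tt, add_sub_cancel_left, ZMod.val_natCast_of_lt (show k < 2 * n + 1 by omega),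
    Finset.mem_Icc]
  exact ⟨hk, hkn⟩

theorem Tt_interval_add_one {I : Set (ZMod (2 * n + 1))}
    (hI : IsIntervalOn (Tt n) Set.univ I) {a b : ZMod (2 * n + 1)} (ha : a ∈ I) (hb : b ∈ I)
    (hab : Tt n a b) : a + 1 ∈ I := by
  obtain ⟨hk, hkn⟩ := Finset.mem_Icc.1 hab
  set k := (b - a).val
  have hb_eq : b = a + 1 + ((k - 1 : ℕ) : ZMod (2 * n + 1)) := by
    rw [Nat.cast_sub hk, Nat.cast_one, ZMod.natCast_zmod_val]
    ring
  rcases hk.eq_or_lt with hk1 | hk1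
  · simpa [hb_eq, ← hk1] using hb
  refine hI.mem_of_rel_of_rel (Tt_isTournament n) ha hb trivial ?_ ?_
  · exact_mod_cast Tt_add_natCast a le_rfl (hk.trans hkn)
  · rw [hb_eq]
    exact Tt_add_natCast _ (by omega) (by omega)

theorem Tt_interval_add_two (hn : 1 ≤ n) {I : Set (ZMod (2 * n + 1))}
    (hI : IsIntervalOn (Tt n) Set.univ I) {x : ZMod (2 * n + 1)} (hx : x ∈ I)
    (hx1 : x + 1 ∈ I) : x + 1 + 1 ∈ I := by
  set y := x + 1 + (n : ZMod (2 * n + 1))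
  have hxy : Tt n (x + 1) y := Tt_add_natCast _ hn le_rfl
  -- `(n + 1) + n = 2n + 1 = 0`, so `y → y + n = x`.
  have hyx : Tt n y x := by
    have hx_eq : x = y + n := by
      have h0 := ZMod.natCast_self (2 * n + 1)
      push_cast at h0
      linear_combination -h0
    rw [hx_eq]
    exact Tt_add_natCast _ hn le_rfl
  exact Tt_interval_add_one hI hx1
    (hI.mem_of_rel_of_rel (Tt_isTournament n) hx1 hx trivial hxy hyx) hxy

theorem Tt_interval_eq_univ (hn : 1 ≤ n) {I : Set (ZMod (2 * n + 1))}
    (hI : IsIntervalOn (Tt n) Set.univ I) {x : ZMod (2 * n + 1)} (hx : x ∈ I)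
    (hx1 : x + 1 ∈ I) : I = Set.univ := by
  have hstep : ∀ m : ℕ, x + m ∈ I ∧ x + m + 1 ∈ I := by
    intro m
    induction m with
    | zero => simpa using ⟨hx, hx1⟩
    | succ m ih =>
      push_cast
      rw [← add_assoc]
      exact ⟨ih.2, Tt_interval_add_two hn hI ih.1 ih.2⟩
  refine Set.eq_univ_of_forall fun y => ?_
  simpa using (hstep (y - x).val).1

end CircularTournament

theorem Tt_indecomposable_general (n : ℕ) :
    IndecomposableOn (Tt n) Set.univ := by
  intro I hI
  rcases I.subsingleton_or_nontrivial with hI₁ | ⟨a, ha, b, hb, hab⟩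
  · rcases hI₁.eq_empty_or_singleton with h | h
    · exact Or.inl h
    · exact Or.inr (Or.inl h)
  refine Or.inr (Or.inr ?_)
  wlog hab' : Tt n a b generalizing a b
  · exact this b hb a ha hab.symm (((Tt_isTournament n).rel_or_rel hab).resolve_left hab')
  obtain ⟨hk, hkn⟩ := Finset.mem_Icc.1 hab'
  exact Tt_interval_eq_univ (hk.trans hkn) hI ha (Tt_interval_add_one hI ha hb hab')

/-- For `n ≥ 2`, the tournament `T_{2n+1}` is indecomposable. -/
theorem Tt_indecomposable (n : ℕ) (hn : 2 ≤ n) :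
    IndecomposableOn (Tt n) Set.univ :=
  Tt_indecomposable_general n
end

section
/- For every n ≥ 2 and every i ∈ Z/(2n+1)Z, the unique nontrivial interval of the tournament T_{2n+1} − i (obtained by deleting vertex i) is {i+n, i+n+1}. -/
/-!
Write `d(x, y) = (y - x).val` for the clockwise distance in `ZMod (2n+1)`, so that `x → y` in
`T_{2n+1}` iff `1 ≤ d(x, y) ≤ n`. If `a, b` lie in an interval `I` of `T_{2n+1} − i` with
`1 ≤ d(a, b) = d ≤ n`, every vertex at distance `e ∈ (0, d) ∪ (n, n + d]` after `a` separates them,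
so it lies in `I` or equals `i`. Hence two vertices of `I` at distance exactly `n` force `I` to be
everything but `i`. For a proper `I` the vertices `a + n + 1` and `b + n` are therefore both `i`,
that is `a = i + n` and `b = i + n + 1`. Conversely `i` is the only vertex separating `i + n` and
`i + n + 1`.
-/

def Separates {V : Type*} (r : V → V → Prop) (x a b : V) : Prop :=
  ¬ (r x a ↔ r x b)

section Intervals

variable {V : Type*} {r : V → V → Prop} {X I : Set V} {x a b u v : V}

theorem IsIntervalOn.mem_of_separates (hr : IsTournament r) (hI : IsIntervalOn r X I)
    (hx : x ∈ X) (ha : a ∈ I) (hb : b ∈ I) (hsep : Separates r x a b) : x ∈ I := by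
  by_contra hxI
  have hxa : x ≠ a := fun h => hxI (h ▸ ha)
  have hxb : x ≠ b := fun h => hxI (h ▸ hb)
  rcases hI.2 x ⟨hx, hxI⟩ with hout | hin
  · exact hsep (iff_of_true (hout a ha) (hout b hb))
  · exact hsep (iff_of_false (fun h => (hr.2 x a hxa).1 h (hin a ha))
      (fun h => (hr.2 x b hxb).1 h (hin b hb)))

theorem isIntervalOn_pair (hr : IsTournament r) (hu : u ∈ X) (hv : v ∈ X)
    (h : ∀ x ∈ X \ {u, v}, ¬ Separates r x u v) : IsIntervalOn r X {u, v} := by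
  refine ⟨Set.insert_subset hu (Set.singleton_subset_iff.2 hv), fun x hx => ?_⟩
  have hxu : x ≠ u := fun hxu => hx.2 (Or.inl hxu)
  have hxv : x ≠ v := fun hxv => hx.2 (Or.inr hxv)
  have huv : r x u ↔ r x v := not_not.1 (h x hx)
  by_cases hxu_arc : r x u
  · left
    rintro _ (rfl | rfl)
    exacts [hxu_arc, huv.1 hxu_arc]
  · right
    rintro _ (rfl | rfl)
    · exact not_not.1 ((hr.2 x _ hxu).not.1 hxu_arc)
    · exact not_not.1 ((hr.2 x _ hxv).not.1 (mt huv.2 hxu_arc))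

end Intervals

namespace ZMod

variable {m : ℕ}

theorem val_sub_eq_zero_iff {x y : ZMod m} : (y - x).val = 0 ↔ y = x := by
  rw [val_eq_zero, sub_eq_zero]

theorem val_add_natCast_sub (a : ZMod m) {k : ℕ} (hk : k < m) : (a + k - a).val = k := by
  rw [add_sub_cancel_left, val_natCast_of_lt hk]

theorem val_add_natCast_add_one_sub (a : ZMod m) {k : ℕ} (hk : k + 1 < m) :
    (a + k + 1 - a).val = k + 1 := by
  rw [add_assoc, ← Nat.cast_add_one]
  exact val_add_natCast_sub a hk

variable [NeZero m]

theorem val_add_cases (a b : ZMod m) :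
    (a + b).val = a.val + b.val ∨ (a + b).val + m = a.val + b.val := by
  rcases lt_or_ge (a.val + b.val) m with h | h
  · exact Or.inl (val_add_of_lt h)
  · exact Or.inr (val_add_val_of_le h).symm

theorem val_sub_cases (x y z : ZMod m) :
    (z - x).val = (z - y).val + (y - x).val ∨ (z - x).val + m = (z - y).val + (y - x).val := by
  simpa only [sub_add_sub_cancel] using val_add_cases (z - y) (y - x)

theorem val_sub_add_val_sub {x y : ZMod m} (h : x ≠ y) : (y - x).val + (x - y).val = m := by
  have hyx := (val_sub_eq_zero_iff (x := x) (y := y)).not.2 h.symm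
  have hself : (x - x).val = 0 := by simp
  rcases val_sub_cases x y x with h' | h' <;> omega

theorem eq_add_of_val_sub_eq {x y : ZMod m} {k : ℕ} (h : (y - x).val = k) : y = x + k := by
  rw [← h, natCast_zmod_val, add_sub_cancel]

end ZMod

section Tt

open ZMod

variable {n : ℕ} {I : Set (ZMod (2*n+1))} {i x y a b p q u v : ZMod (2*n+1)}

theorem Tt_iff_val : Tt n x y ↔ 1 ≤ (y - x).val ∧ (y - x).val ≤ n := Finset.mem_Icc

theorem isTournament_Tt : IsTournament (Tt n) := by
  refine ⟨fun x => by simp [Tt_iff_val], fun x y hxy => ?_⟩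
  have := val_sub_add_val_sub hxy
  have := val_lt (x - y)
  have := val_lt (y - x)
  simp only [Tt_iff_val]
  omega

theorem separates_Tt (hd : 1 ≤ (b - a).val ∧ (b - a).val ≤ n)
    (he : (1 ≤ (x - a).val ∧ (x - a).val < (b - a).val) ∨
      (n < (x - a).val ∧ (x - a).val ≤ n + (b - a).val)) :
    Separates (Tt n) x a b := by
  have hxa : a ≠ x := fun h => by subst h; simp at he
  have hsum := val_sub_add_val_sub hxa
  have := val_lt (b - x)
  rcases val_sub_cases x a b with h | h <;>
    · simp only [Separates, Tt_iff_val]; omega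

theorem not_separates_Tt_of_val_sub_eq_one (huv : (v - u).val = 1) (hxu : x ≠ u) (hxv : x ≠ v)
    (hxn : (u - x).val ≠ n) : ¬ Separates (Tt n) x u v := by
  have := val_sub_eq_zero_iff.not.2 hxu.symm
  have := val_sub_eq_zero_iff.not.2 hxv.symm
  have := val_lt (u - x)
  rcases val_sub_cases x u v with h | h <;>
    · simp only [Separates, Tt_iff_val]; omega

theorem Tt_interval_eq_compl_of_val_sub_eq (hI : IsIntervalOn (Tt n) {i}ᶜ I) (hp : p ∈ I)
    (hq : q ∈ I) (hpq : (q - p).val = n) : I = {i}ᶜ := by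
  refine hI.1.antisymm fun z hz => ?_
  by_cases h0 : (z - p).val = 0
  · rwa [val_sub_eq_zero_iff.1 h0]
  by_cases hn : (z - p).val = n
  · rwa [sub_left_injective (val_injective _ (hn.trans hpq.symm))]
  have := val_lt (z - p)
  exact hI.mem_of_separates isTournament_Tt hz hp hq (separates_Tt (by omega) (by omega))

theorem Tt_interval_eq_mid_of_val_sub_le (hI : IsIntervalOn (Tt n) {i}ᶜ I) (hne : I ≠ {i}ᶜ)
    (ha : a ∈ I) (hb : b ∈ I) (hab : 1 ≤ (b - a).val ∧ (b - a).val ≤ n) :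
    a = i + n ∧ b = i + n + 1 := by
  have eq_of_separates : ∀ x, Separates (Tt n) x a b → x ∉ I → x = i := fun x hx hxI =>
    by_contra fun hxi => hxI (hI.mem_of_separates isTournament_Tt hxi ha hb hx)
  set x := a + (n + 1 : ℕ)
  set y := b + (n : ℕ)
  have hx : (x - a).val = n + 1 := val_add_natCast_sub a (by omega)
  have hy : (y - b).val = n := val_add_natCast_sub b (by omega)
  have hax : (a - x).val = n := by
    have := val_sub_add_val_sub (x := a) (y := x) fun h => by simp [← h] at hx
    omega
  have hya : (y - a).val = n + (b - a).val := by
    have := val_lt (y - a)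
    rcases val_sub_cases a b y with h | h <;> omega
  have hxi : x = i := eq_of_separates x (separates_Tt hab (by omega))
    fun hxI => hne (Tt_interval_eq_compl_of_val_sub_eq hI hxI ha hax)
  have hyi : y = i := eq_of_separates y (separates_Tt hab (by omega))
    fun hyI => hne (Tt_interval_eq_compl_of_val_sub_eq hI hb hyI hy)
  have hby : (b - y).val = n + 1 := by
    have := val_sub_add_val_sub (x := b) (y := y) fun h => by simp [← h] at hy; omega
    omega
  refine ⟨hxi ▸ eq_add_of_val_sub_eq hax, ?_⟩
  rw [add_assoc, ← Nat.cast_add_one, ← hyi]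
  exact eq_add_of_val_sub_eq hby

theorem Tt_interval_pair_eq_mid (hI : IsIntervalOn (Tt n) {i}ᶜ I) (hne : I ≠ {i}ᶜ)
    (hp : p ∈ I) (hq : q ∈ I) (hpq : p ≠ q) :
    ({p, q} : Set (ZMod (2*n+1))) = {i + n, i + n + 1} := by
  have := val_sub_add_val_sub hpq
  have := val_sub_eq_zero_iff.not.2 hpq.symm
  have := val_sub_eq_zero_iff.not.2 hpq
  rcases le_or_gt (q - p).val n with h | h
  · obtain ⟨rfl, rfl⟩ := Tt_interval_eq_mid_of_val_sub_le hI hne hp hq ⟨by omega, h⟩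
    rfl
  · obtain ⟨rfl, rfl⟩ := Tt_interval_eq_mid_of_val_sub_le hI hne hq hp ⟨by omega, by omega⟩
    exact Set.pair_comm _ _

theorem isIntervalOn_Tt_mid (hn : 1 ≤ n) (i : ZMod (2*n+1)) :
    IsIntervalOn (Tt n) {i}ᶜ {i + n, i + n + 1} := by
  have hu : (i + n - i).val = n := val_add_natCast_sub i (by omega)
  have hv : (i + n + 1 - i).val = n + 1 := val_add_natCast_add_one_sub i (by omega)
  have huv : (i + n + 1 - (i + n)).val = 1 := by
    rw [add_sub_cancel_left]
    exact val_one'' (by omega)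
  refine isIntervalOn_pair isTournament_Tt (fun h => ?_) (fun h => ?_) fun x hx =>
    not_separates_Tt_of_val_sub_eq_one huv (fun h => hx.2 (Or.inl h)) (fun h => hx.2 (Or.inr h))
      fun h => hx.1 (sub_right_injective (val_injective _ (h.trans hu.symm)))
  · rw [h, sub_self, val_zero] at hu
    omega
  · rw [h, sub_self, val_zero] at hv
    omega

theorem pair_add_natCast_nontrivial (hn : 1 ≤ n) :
    ({i + n, i + n + 1} : Set (ZMod (2*n+1))).Nontrivial := by
  refine Set.nontrivial_pair fun h => ?_
  have hv := val_add_natCast_add_one_sub i (k := n) (by omega)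
  rw [← h, val_add_natCast_sub i (by omega)] at hv
  omega

theorem pair_add_natCast_ne_compl (hn : 2 ≤ n) : ({i + n, i + n + 1} : Set (ZMod (2*n+1))) ≠ {i}ᶜ := by
  intro h
  have h1 : (i + 1 - i).val = 1 := by
    rw [add_sub_cancel_left]
    exact val_one'' (by omega)
  have hmem : i + 1 ∈ ({i + n, i + n + 1} : Set (ZMod (2*n+1))) := h ▸ fun h' => by
    rw [h', sub_self, val_zero] at h1
    omega
  rcases hmem with h' | h'
  · rw [h', val_add_natCast_sub i (by omega)] at h1
    omega
  · rw [h', val_add_natCast_add_one_sub i (by omega)] at h1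
    omega

end Tt

/-- For `n ≥ 2` and each vertex `i`, the unique nontrivial interval of
`T_{2n+1} − i` is `{i+n, i+n+1}`. -/
theorem Tt_delete_unique_interval (n : ℕ) (hn : 2 ≤ n) (i : ZMod (2*n+1)) :
    ∀ I : Set (ZMod (2*n+1)),
      (IsIntervalOn (Tt n) {i}ᶜ I ∧ I ≠ ∅ ∧ (¬ ∃ a, I = {a}) ∧ I ≠ {i}ᶜ) ↔
        I = {i + (n : ZMod (2*n+1)), i + (n : ZMod (2*n+1)) + 1} := by
  intro I
  constructor
  · rintro ⟨hI, hempty, hsingle, hne⟩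
    have hI' : I.Nontrivial := (Set.nonempty_iff_ne_empty.2 hempty)
      |>.exists_eq_singleton_or_nontrivial.resolve_left hsingle
    refine subset_antisymm (fun z hz => ?_) ?_
    · obtain ⟨w, hw, hwz⟩ := hI'.exists_ne z
      exact Tt_interval_pair_eq_mid hI hne hz hw hwz.symm ▸ Set.mem_insert z {w}
    · obtain ⟨a, ha, b, hb, hab⟩ := hI'
      exact Tt_interval_pair_eq_mid hI hne ha hb hab ▸
        Set.insert_subset ha (Set.singleton_subset_iff.2 hb)
  · rintro rfl
    refine ⟨isIntervalOn_Tt_mid (by omega) i, Set.insert_nonempty _ _ |>.ne_empty, ?_, pair_add_natCast_ne_compl hn⟩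
    rintro ⟨a, ha⟩
    exact (pair_add_natCast_nontrivial (by omega)).not_subsingleton (ha ▸ Set.subsingleton_singleton)
end

section
/- Let T = (V,A) be a tournament and X ⊆ V with |X| ≥ 3 such that T(X) is indecomposable. Then the family {X(u) : u ∈ X} ∪ {Ext(X), [X]} is a partition of V − X, where Ext(X) = {x ∈ V−X : T(X ∪ {x}) is indecomposable}, [X] = {x ∈ V−X : x → X or X → x}, and X(u) = {x ∈ V−X : {u,x} is an interval of T(X ∪ {x})}. -/
/-
Every proper nontrivial interval `I` of `T(X ∪ {x})` meets `X` in an interval of the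
indecomposable `T(X)`. If `x ∉ I` this forces `I = X`, so `x ∈ [X]`; if `x ∈ I` it forces
`I ∩ X = {u}`, so `x ∈ X(u)`. Disjointness comes from two closure properties of intervals
in a tournament: two intervals sharing a vertex have an interval as union (so `x ∈ X(u) ∩ X(v)`
makes `{u, v}` an interval of `T(X)`), and `I \ J` is an interval as soon as `J ⊄ I` (so
`x ∈ X(u) ∩ [X]` makes `X \ {u}` an interval of `T(X)`).
-/

section

variable {V : Type*} {r : V → V → Prop} {X Y Z I J : Set V} {x : V}

theorem IsTournament.asymm (hr : IsTournament r) {a b : V} (hab : r a b) : ¬ r b a := by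
  rcases eq_or_ne a b with rfl | hne
  · exact absurd hab (hr.1 a)
  · exact (hr.2 a b hne).mp hab

theorem IsIntervalOn.inter_of_subset (hI : IsIntervalOn r Y I) (hZY : Z ⊆ Y) :
    IsIntervalOn r Z (I ∩ Z) := by
  refine ⟨Set.inter_subset_right, fun z hz => ?_⟩
  have hzI : z ∉ I := fun hzI => hz.2 ⟨hzI, hz.1⟩
  rcases hI.2 z ⟨hZY hz.1, hzI⟩ with h | h
  · exact Or.inl fun i hi => h i hi.1
  · exact Or.inr fun i hi => h i hi.1

theorem IsIntervalOn.union (hr : IsTournament r) (hI : IsIntervalOn r Y I)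
    (hJ : IsIntervalOn r Y J) (hIJ : (I ∩ J).Nonempty) : IsIntervalOn r Y (I ∪ J) := by
  obtain ⟨w, hwI, hwJ⟩ := hIJ
  refine ⟨Set.union_subset hI.1 hJ.1, fun z hz => ?_⟩
  have hzI : z ∉ I := fun h => hz.2 (Or.inl h)
  have hzJ : z ∉ J := fun h => hz.2 (Or.inr h)
  rcases hI.2 z ⟨hz.1, hzI⟩ with hzI' | hIz <;> rcases hJ.2 z ⟨hz.1, hzJ⟩ with hzJ' | hJz
  · exact Or.inl fun i hi => hi.elim (hzI' i) (hzJ' i)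
  · exact absurd (hJz w hwJ) (hr.asymm (hzI' w hwI))
  · exact absurd (hzJ' w hwJ) (hr.asymm (hIz w hwI))
  · exact Or.inr fun i hi => hi.elim (hIz i) (hJz i)

/-- A vertex `w ∈ J \ I` dominates (or is dominated by) all of `I`; every vertex of `I \ J`
then sees `J` from the same side as it sees `w`, which separates `I ∩ J` from `I \ J`. -/
theorem IsIntervalOn.diff (hr : IsTournament r) (hI : IsIntervalOn r Y I)
    (hJ : IsIntervalOn r Y J) (hJI : (J \ I).Nonempty) : IsIntervalOn r Y (I \ J) := by
  obtain ⟨w, hwJ, hwI⟩ := hJI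
  refine ⟨Set.sdiff_subset.trans hI.1, fun z hz => ?_⟩
  by_cases hzI : z ∈ I
  · have hzJ : z ∈ J := by_contra fun h => hz.2 ⟨hzI, h⟩
    rcases hI.2 w ⟨hJ.1 hwJ, hwI⟩ with hwI' | hIw
    · refine Or.inl fun y hy => ?_
      rcases hJ.2 y ⟨hI.1 hy.1, hy.2⟩ with hyJ | hJy
      · exact absurd (hyJ w hwJ) (hr.asymm (hwI' y hy.1))
      · exact hJy z hzJ
    · refine Or.inr fun y hy => ?_
      rcases hJ.2 y ⟨hI.1 hy.1, hy.2⟩ with hyJ | hJy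
      · exact hyJ z hzJ
      · exact absurd (hJy w hwJ) (hr.asymm (hIw y hy.1))
  · rcases hI.2 z ⟨hz.1, hzI⟩ with h | h
    · exact Or.inl fun i hi => h i hi.1
    · exact Or.inr fun i hi => h i hi.1

theorem indecomposableOn_iff :
    IndecomposableOn r Y ↔ ∀ I, IsIntervalOn r Y I → I.Nontrivial → I = Y := by
  refine forall_congr' fun I => imp_congr_right fun _ => ?_
  rw [← or_assoc, ← Set.subsingleton_iff_eq_empty_or_singleton, ← Set.not_nontrivial_iff,
    imp_iff_not_or]

theorem IndecomposableOn.eq_of_isIntervalOn (hY : IndecomposableOn r Y)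
    (hI : IsIntervalOn r Y I) (hnt : I.Nontrivial) : I = Y :=
  indecomposableOn_iff.mp hY I hI hnt

theorem mem_brSet_iff : x ∈ BrSet r X ↔ x ∉ X ∧ IsIntervalOn r (X ∪ {x}) X := by
  refine and_congr_right fun hxX => ?_
  have hdiff : (X ∪ {x}) \ X = {x} := Set.union_sdiff_cancel_left (by simpa using hxX)
  simp only [IsIntervalOn, Set.subset_union_left, true_and, hdiff, Set.mem_singleton_iff,
    forall_eq]

theorem not_subset_pair_of_three_le_ncard (hX : 3 ≤ X.ncard) (a b : V) : ¬ X ⊆ {a, b} := by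
  intro hab
  have := (Set.ncard_le_ncard hab).trans (Set.ncard_insert_le a {b})
  rw [Set.ncard_singleton] at this
  omega

theorem nontrivial_diff_singleton_of_three_le_ncard (hX : 3 ≤ X.ncard) (a : V) :
    (X \ {a}).Nontrivial := by
  have := Set.ncard_le_ncard_sdiff_add_ncard X {a}
  rw [Set.ncard_singleton] at this
  exact (Set.one_lt_ncard_iff_nontrivial_and_finite.mp (by omega)).1

theorem mem_xuSet_or_extSet_or_brSet (hind : IndecomposableOn r X) (hxX : x ∉ X) :
    (∃ u ∈ X, x ∈ XuSet r X u) ∨ x ∈ ExtSet r X ∨ x ∈ BrSet r X := by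
  by_cases hext : IndecomposableOn r (X ∪ {x})
  · exact Or.inr (Or.inl ⟨hxX, hext⟩)
  simp only [indecomposableOn_iff, not_forall, exists_prop] at hext
  obtain ⟨I, hI, hnt, hne⟩ := hext
  have hIX := hI.inter_of_subset (Z := X) Set.subset_union_left
  by_cases hxI : x ∈ I
  · have hsub : (I ∩ X).Subsingleton := by
      refine Set.not_nontrivial_iff.mp fun hnt' => hne ?_
      have hXI : X ⊆ I := (hind.eq_of_isIntervalOn hIX hnt').symm ▸ Set.inter_subset_left
      exact hI.1.antisymm (Set.union_subset hXI (Set.singleton_subset_iff.mpr hxI))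
    obtain ⟨u, huI, hux⟩ := hnt.exists_ne x
    have huX : u ∈ X := (hI.1 huI).resolve_right hux
    have hIeq : I = {u, x} := by
      refine Set.Subset.antisymm (fun y hy => ?_) (Set.insert_subset huI (by simpa using hxI))
      rcases hI.1 hy with hyX | rfl
      · exact Or.inl (hsub ⟨hy, hyX⟩ ⟨huI, huX⟩)
      · exact Or.inr rfl
    exact Or.inl ⟨u, huX, hxX, hIeq ▸ hI⟩
  · have hIX' : I ∩ X = I :=
      Set.inter_eq_left.mpr fun y hy => (hI.1 hy).resolve_right (by rintro rfl; exact hxI hy)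
    rw [hIX'] at hIX
    have hIeq : I = X := hind.eq_of_isIntervalOn hIX hnt
    exact Or.inr (Or.inr (mem_brSet_iff.mpr ⟨hxX, hIeq ▸ hI⟩))

theorem disjoint_xuSet_xuSet (hr : IsTournament r) (hX : 3 ≤ X.ncard)
    (hind : IndecomposableOn r X) {u v : V} (hu : u ∈ X) (hv : v ∈ X) (huv : u ≠ v) :
    Disjoint (XuSet r X u) (XuSet r X v) := by
  refine Set.disjoint_left.mpr fun x ⟨hxX, hxu⟩ ⟨_, hxv⟩ => ?_
  have hunion := (hxu.union hr hxv ⟨x, by simp, by simp⟩).inter_of_subset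
    (Z := X) Set.subset_union_left
  have hnt : (({u, x} ∪ {v, x}) ∩ X).Nontrivial :=
    ⟨u, ⟨by simp, hu⟩, v, ⟨by simp, hv⟩, huv⟩
  refine not_subset_pair_of_three_le_ncard hX u v fun y hy => ?_
  rw [← hind.eq_of_isIntervalOn hunion hnt] at hy
  obtain ⟨(rfl | rfl) | (rfl | rfl), hyX⟩ := hy
  exacts [Or.inl rfl, absurd hyX hxX, Or.inr rfl, absurd hyX hxX]

theorem disjoint_xuSet_extSet (hX : 3 ≤ X.ncard) {u : V} (hu : u ∈ X) :
    Disjoint (XuSet r X u) (ExtSet r X) := by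
  refine Set.disjoint_left.mpr fun x ⟨hxX, hxu⟩ ⟨_, hext⟩ => ?_
  have hux : u ≠ x := by rintro rfl; exact hxX hu
  have hpair := hext.eq_of_isIntervalOn hxu (Set.nontrivial_pair hux)
  exact not_subset_pair_of_three_le_ncard hX u x (hpair ▸ Set.subset_union_left)

theorem disjoint_xuSet_brSet (hr : IsTournament r) (hX : 3 ≤ X.ncard)
    (hind : IndecomposableOn r X) {u : V} (hu : u ∈ X) :
    Disjoint (XuSet r X u) (BrSet r X) := by
  refine Set.disjoint_left.mpr fun x ⟨hxX, hxu⟩ hbr => ?_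
  have hXx := (mem_brSet_iff.mp hbr).2
  have hdiff := ((hXx.diff hr hxu ⟨x, by simp, hxX⟩).inter_of_subset
    (Z := X) Set.subset_union_left)
  rw [Set.inter_eq_left.mpr Set.sdiff_subset] at hdiff
  have hsub : X \ {u} ⊆ X \ {u, x} := fun y hy =>
    ⟨hy.1, by rintro (rfl | rfl); exacts [hy.2 rfl, hxX hy.1]⟩
  have hnt := (nontrivial_diff_singleton_of_three_le_ncard hX u).mono hsub
  have hu' : u ∈ X \ {u, x} := (hind.eq_of_isIntervalOn hdiff hnt).symm ▸ hu
  exact hu'.2 (Or.inl rfl)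

theorem disjoint_extSet_brSet (hX : 3 ≤ X.ncard) : Disjoint (ExtSet r X) (BrSet r X) := by
  refine Set.disjoint_left.mpr fun x ⟨hxX, hext⟩ hbr => hxX ?_
  have hnt : X.Nontrivial := (Set.one_lt_ncard_iff_nontrivial_and_finite.mp (by omega)).1
  rw [hext.eq_of_isIntervalOn (mem_brSet_iff.mp hbr).2 hnt]
  exact Or.inr rfl

end

theorem partition_lemma_general {V : Type*} (r : V → V → Prop) (X : Set V)
    (h : IsTournament r) (hX : 3 ≤ X.ncard) (hind : IndecomposableOn r X) :
    ((⋃ u ∈ X, XuSet r X u) ∪ ExtSet r X ∪ BrSet r X = Xᶜ) ∧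
      (∀ u ∈ X, ∀ v ∈ X, u ≠ v → Disjoint (XuSet r X u) (XuSet r X v)) ∧
      (∀ u ∈ X, Disjoint (XuSet r X u) (ExtSet r X)) ∧
      (∀ u ∈ X, Disjoint (XuSet r X u) (BrSet r X)) ∧
      Disjoint (ExtSet r X) (BrSet r X) := by
  refine ⟨?_, fun u hu v hv => disjoint_xuSet_xuSet h hX hind hu hv,
    fun u hu => disjoint_xuSet_extSet hX hu, fun u hu => disjoint_xuSet_brSet h hX hind hu,
    disjoint_extSet_brSet hX⟩
  refine Set.Subset.antisymm ?_ fun x hxX => ?_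
  · rintro x ((hx | hx) | hx)
    · obtain ⟨u, -, hxu⟩ := Set.mem_iUnion₂.mp hx
      exact hxu.1
    exacts [hx.1, hx.1]
  · rcases mem_xuSet_or_extSet_or_brSet hind hxX with ⟨u, hu, hxu⟩ | hext | hbr
    · exact Or.inl (Or.inl (Set.mem_biUnion hu hxu))
    · exact Or.inl (Or.inr hext)
    · exact Or.inr hbr

/-- The family `{X(u) : u ∈ X} ∪ {Ext(X), [X]}` is a partition of `V − X`. -/
theorem partition_lemma {V : Type*} [Fintype V] (r : V → V → Prop) (X : Set V)
    (h : IsTournament r) (hX : 3 ≤ X.ncard) (hind : IndecomposableOn r X) :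
    ((⋃ u ∈ X, XuSet r X u) ∪ ExtSet r X ∪ BrSet r X = Xᶜ) ∧
      (∀ u ∈ X, ∀ v ∈ X, u ≠ v → Disjoint (XuSet r X u) (XuSet r X v)) ∧
      (∀ u ∈ X, Disjoint (XuSet r X u) (ExtSet r X)) ∧
      (∀ u ∈ X, Disjoint (XuSet r X u) (BrSet r X)) ∧
      Disjoint (ExtSet r X) (BrSet r X) :=
  partition_lemma_general r X h hX hind
end

section
/- Let T = (V,A) be a tournament, X ⊆ V with |X| ≥ 3 and T(X) indecomposable, and u ∈ X. For all x ∈ X(u) and all y ∈ V − (X ∪ X(u)), if T(X ∪ {x,y}) is decomposable then {u,x} is an interval of T(X ∪ {x,y}). -/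
/-!
If `y` separated `u` from `x`, then `T(X ∪ {x, y})` would be indecomposable. An interval `I` of
it meets `X` in an interval of `T(X)`, hence in `∅`, a singleton `{a}` or all of `X`. If `I`
contains `y` and one of `u`, `x`, but nothing else of `X`, its uniformity puts `y` into `X(u)`;
an interval `{a, y}` with `a ≠ u` would force `y` to treat `u` and `x` alike; an interval
containing `a ≠ u` and `x` restricts to the nontrivial interval `{u, a}` of `T(X)`; and an
interval containing `X` but not `x` would make `X − {u}` an interval of `T(X)`. Only the
trivial intervals remain.
-/

section

variable {V : Type*} {r : V → V → Prop}

theorem IsTournament.rel_iff_not_rel (h : IsTournament r) {a b : V} (hab : a ≠ b) :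
    r a b ↔ ¬ r b a :=
  h.2 a b hab

theorem IsIntervalOn.rel_iff_rel {S I : Set V} (hI : IsIntervalOn r S I) (h : IsTournament r)
    {v a b : V} (hv : v ∈ S) (hvI : v ∉ I) (ha : a ∈ I) (hb : b ∈ I) : r v a ↔ r v b := by
  rcases hI.2 v ⟨hv, hvI⟩ with hout | hin
  · exact iff_of_true (hout a ha) (hout b hb)
  · rw [h.rel_iff_not_rel (ne_of_mem_of_not_mem ha hvI).symm,
      h.rel_iff_not_rel (ne_of_mem_of_not_mem hb hvI).symm]
    simp [hin a ha, hin b hb]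

theorem IsIntervalOn.inter_of_subset_s11 {S T I : Set V} (hI : IsIntervalOn r S I) (hTS : T ⊆ S) :
    IsIntervalOn r T (I ∩ T) :=
  ⟨Set.inter_subset_right, fun z hz =>
    (hI.2 z ⟨hTS hz.1, fun hzI => hz.2 ⟨hzI, hz.1⟩⟩).imp
      (fun hout i hi => hout i hi.1) (fun hin i hi => hin i hi.1)⟩

theorem isIntervalOn_pair_iff (h : IsTournament r) {S : Set V} {a b : V} (ha : a ∈ S)
    (hb : b ∈ S) :
    IsIntervalOn r S {a, b} ↔ ∀ v ∈ S, v ≠ a → v ≠ b → (r v a ↔ r v b) := by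
  refine ⟨fun hI v hv hva hvb => hI.rel_iff_rel h hv (by simp [hva, hvb]) (by simp) (by simp),
    fun hab => ⟨Set.insert_subset ha (Set.singleton_subset_iff.2 hb), ?_⟩⟩
  rintro v ⟨hv, hvab⟩
  simp only [Set.mem_insert_iff, Set.mem_singleton_iff, not_or] at hvab
  have hiff := hab v hv hvab.1 hvab.2
  simp only [Set.mem_insert_iff, Set.mem_singleton_iff, forall_eq_or_imp, forall_eq]
  by_cases hva : r v a
  · exact Or.inl ⟨hva, hiff.1 hva⟩
  · exact Or.inr ⟨(h.rel_iff_not_rel (Ne.symm hvab.1)).2 hva,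
      (h.rel_iff_not_rel (Ne.symm hvab.2)).2 (mt hiff.2 hva)⟩

theorem mem_XuSet_iff (h : IsTournament r) {X : Set V} {u y : V} (hu : u ∈ X) :
    y ∈ XuSet r X u ↔ y ∉ X ∧ ∀ v ∈ X, v ≠ u → (r v u ↔ r v y) := by
  rw [XuSet, Set.mem_ofPred_eq, isIntervalOn_pair_iff h (Or.inl hu) (Or.inr rfl)]
  refine and_congr_right fun hyX =>
    ⟨fun hXu v hv hvu => hXu v (Or.inl hv) hvu (ne_of_mem_of_not_mem hv hyX), ?_⟩
  rintro hXu v (hv | hvy) hvu hvy'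
  · exact hXu v hv hvu
  · exact absurd hvy hvy'

theorem IndecomposableOn.eq_of_isIntervalOn_s11 {X I : Set V} (hind : IndecomposableOn r X)
    (hI : IsIntervalOn r X I) (hI2 : 2 ≤ I.ncard) : I = X := by
  rcases hind I hI with rfl | ⟨a, rfl⟩ | hIX
  · simp at hI2
  · simp at hI2
  · exact hIX

theorem IndecomposableOn.not_isIntervalOn_pair {X : Set V} (hind : IndecomposableOn r X)
    (hX : 3 ≤ X.ncard) {a b : V} (hab : a ≠ b) : ¬ IsIntervalOn r X {a, b} := fun hI => by
  have hX2 := hind.eq_of_isIntervalOn_s11 hI (Set.ncard_pair hab).ge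
  rw [← hX2, Set.ncard_pair hab] at hX
  omega

theorem notMem_BrSet_of_mem_XuSet (h : IsTournament r) {X : Set V} (hX : 3 ≤ X.ncard)
    (hind : IndecomposableOn r X) {u x : V} (hu : u ∈ X) (hx : x ∈ XuSet r X u) :
    x ∉ BrSet r X := by
  rintro ⟨hxX, hunif⟩
  have hxu := ((mem_XuSet_iff h hu).1 hx).2
  have hI : IsIntervalOn r X (X \ {u}) := by
    refine ⟨Set.sdiff_subset, ?_⟩
    rintro v ⟨hv, hvu⟩
    obtain rfl : v = u := by simpa [hv] using hvu
    rcases hunif with hout | hin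
    · refine Or.inl fun i ⟨hi, hiu⟩ => ?_
      rw [h.rel_iff_not_rel (Ne.symm hiu), hxu i hi hiu,
        ← h.rel_iff_not_rel (ne_of_mem_of_not_mem hi hxX).symm]
      exact hout i hi
    · exact Or.inr fun i ⟨hi, hiu⟩ => (hxu i hi hiu).2 (hin i hi)
  have hXu := hind.eq_of_isIntervalOn_s11 hI (by rw [Set.ncard_sdiff_singleton_of_mem hu]; omega)
  exact (hXu.ge hu).2 rfl

theorem mem_XuSet_of_isIntervalOn (h : IsTournament r) {X I : Set V} {u x y : V} (hu : u ∈ X)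
    (hx : x ∈ XuSet r X u) (hyX : y ∉ X) (hI : IsIntervalOn r (X ∪ {x, y}) I)
    (hIsub : I ⊆ {u, x, y}) (hyI : y ∈ I) (hux : u ∈ I ∨ x ∈ I) : y ∈ XuSet r X u := by
  obtain ⟨hxX, hxu⟩ := (mem_XuSet_iff h hu).1 hx
  refine (mem_XuSet_iff h hu).2 ⟨hyX, fun v hv hvu => ?_⟩
  have hvI : v ∉ I := fun hvI => by
    rcases hIsub hvI with rfl | rfl | rfl
    exacts [hvu rfl, hxX hv, hyX hv]
  have hvy : ∀ {w}, w ∈ I → (r v w ↔ r v y) := fun hw => hI.rel_iff_rel h (Or.inl hv) hvI hw hyI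
  rcases hux with huI | hxI
  · exact hvy huI
  · exact (hxu v hv hvu).trans (hvy hxI)

theorem not_isIntervalOn_pair_of_separates (h : IsTournament r) {X : Set V} {u x y a : V}
    (hu : u ∈ X) (hx : x ∈ XuSet r X u) (hyX : y ∉ X) (hxy : x ≠ y) (ha : a ∈ X) (hau : a ≠ u)
    (hsep : ¬ (r y u ↔ r y x)) : ¬ IsIntervalOn r (X ∪ {x, y}) {a, y} := by
  intro hI
  obtain ⟨hxX, hxu⟩ := (mem_XuSet_iff h hu).1 hx
  have hyu : y ≠ u := ne_of_mem_of_not_mem hu hyX |>.symm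
  have hxa : x ≠ a := ne_of_mem_of_not_mem ha hxX |>.symm
  have hua := hI.rel_iff_rel h (Or.inl hu) (by simp [Ne.symm hau, Ne.symm hyu])
    (Set.mem_insert a _) (Set.mem_insert_of_mem a rfl)
  have hxa' := hI.rel_iff_rel h (Or.inr (Or.inl rfl)) (by simp [hxa, hxy])
    (Set.mem_insert a _) (Set.mem_insert_of_mem a rfl)
  apply hsep
  rw [h.rel_iff_not_rel hyu, h.rel_iff_not_rel (Ne.symm hxy), ← hua, ← hxa',
    h.rel_iff_not_rel (Ne.symm hau), h.rel_iff_not_rel hxa, hxu a ha hau]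

theorem eq_of_isIntervalOn_of_inter_eq_singleton (h : IsTournament r) {X S I : Set V}
    (hX : 3 ≤ X.ncard) (hind : IndecomposableOn r X) {u x a : V} (hu : u ∈ X)
    (hx : x ∈ XuSet r X u) (hXS : X ⊆ S) (hI : IsIntervalOn r S I) (hxI : x ∈ I)
    (hK : I ∩ X = {a}) : a = u := by
  by_contra hau
  obtain ⟨hxX, hxu⟩ := (mem_XuSet_iff h hu).1 hx
  obtain ⟨haI, haX⟩ : a ∈ I ∩ X := hK.ge rfl
  refine hind.not_isIntervalOn_pair hX (Ne.symm hau) <|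
    (isIntervalOn_pair_iff h hu haX).2 fun v hv hvu hva => (hxu v hv hvu).trans ?_
  exact hI.rel_iff_rel h (hXS hv) (fun hvI => hva (hK.le ⟨hvI, hv⟩)) hxI haI

theorem eq_singleton_of_isIntervalOn_of_inter_eq_singleton (h : IsTournament r) {X I : Set V}
    (hX : 3 ≤ X.ncard) (hind : IndecomposableOn r X) {u x y a : V} (hu : u ∈ X)
    (hx : x ∈ XuSet r X u) (hy : y ∉ X ∪ XuSet r X u) (hsep : ¬ (r y u ↔ r y x))
    (hI : IsIntervalOn r (X ∪ {x, y}) I) (hK : I ∩ X = {a}) : I = {a} := by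
  have hyX : y ∉ X := fun hyX => hy (Or.inl hyX)
  have hxy : x ≠ y := fun e => hy (Or.inr (e ▸ hx))
  obtain ⟨haI, haX⟩ : a ∈ I ∩ X := hK.ge rfl
  have hsub : I ⊆ {a, x, y} := fun z hz => by
    rcases hI.1 hz with hzX | hzxy
    exacts [Or.inl (hK.le ⟨hz, hzX⟩), Or.inr hzxy]
  obtain ⟨hxI, hyI⟩ : x ∉ I ∧ y ∉ I := by
    rcases eq_or_ne a u with rfl | hau
    · have hyI : y ∉ I := fun hyI =>
        hy (Or.inr (mem_XuSet_of_isIntervalOn h haX hx hyX hI hsub hyI (Or.inl haI)))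
      exact ⟨fun hxI => hyI (by_contra fun hyI =>
        hsep (hI.rel_iff_rel h (Or.inr (Or.inr rfl)) hyI haI hxI)), hyI⟩
    · have hxI : x ∉ I := fun hxI =>
        hau (eq_of_isIntervalOn_of_inter_eq_singleton h hX hind hu hx
          Set.subset_union_left hI hxI hK)
      refine ⟨hxI, fun hyI => not_isIntervalOn_pair_of_separates h hu hx hyX hxy haX hau hsep ?_⟩
      have hIay : I = {a, y} := Set.Subset.antisymm
        (fun z hz => by
          rcases hsub hz with rfl | rfl | rfl
          exacts [Or.inl rfl, absurd hz hxI, Or.inr rfl])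
        (Set.insert_subset haI (Set.singleton_subset_iff.2 hyI))
      exact hIay ▸ hI
  refine Set.Subset.antisymm (fun z hz => ?_) (Set.singleton_subset_iff.2 haI)
  rcases hsub hz with rfl | rfl | rfl
  exacts [rfl, absurd hz hxI, absurd hz hyI]

theorem indecomposableOn_union_pair_of_separates (h : IsTournament r) {X : Set V}
    (hX : 3 ≤ X.ncard) (hind : IndecomposableOn r X) {u x y : V} (hu : u ∈ X)
    (hx : x ∈ XuSet r X u) (hy : y ∉ X ∪ XuSet r X u) (hsep : ¬ (r y u ↔ r y x)) :
    IndecomposableOn r (X ∪ {x, y}) := by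
  intro I hI
  have hyI : u ∈ I → x ∈ I → y ∈ I := fun huI hxI => by_contra fun hyI =>
    hsep (hI.rel_iff_rel h (Or.inr (Or.inr rfl)) hyI huI hxI)
  rcases hind _ (hI.inter_of_subset_s11 Set.subset_union_left) with hK | ⟨a, hK⟩ | hK
  · have hsub : I ⊆ {x, y} := fun z hz =>
      (hI.1 hz).resolve_left fun hzX => Set.notMem_empty z (hK.le ⟨hz, hzX⟩)
    rcases Set.subset_pair_iff_eq.1 hsub with hI' | hI' | hI' | hI'
    · exact Or.inl hI'
    · exact Or.inr (Or.inl ⟨x, hI'⟩)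
    · exact Or.inr (Or.inl ⟨y, hI'⟩)
    · exact (hy (Or.inr (mem_XuSet_of_isIntervalOn h hu hx (fun hyX => hy (Or.inl hyX)) hI
        (hI'.le.trans (Set.subset_insert u _)) (by simp [hI']) (by simp [hI'])))).elim
  · exact Or.inr (Or.inl ⟨a, eq_singleton_of_isIntervalOn_of_inter_eq_singleton h hX hind hu hx
      hy hsep hI hK⟩)
  · have hXI : X ⊆ I := fun z hz => (hK.ge hz).1
    have hxI : x ∈ I := by_contra fun hxI => notMem_BrSet_of_mem_XuSet h hX hind hu hx
      ⟨hx.1, (hI.2 x ⟨Or.inr (Or.inl rfl), hxI⟩).imp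
        (fun hout i hi => hout i (hXI hi)) (fun hin i hi => hin i (hXI hi))⟩
    exact Or.inr (Or.inr (Set.Subset.antisymm hI.1 (Set.union_subset hXI
      (Set.insert_subset hxI (Set.singleton_subset_iff.2 (hyI (hXI hu) hxI))))))

end

theorem Xu_extension_interval_general {V : Type*} (r : V → V → Prop) (X : Set V)
    (h : IsTournament r) (hX : 3 ≤ X.ncard) (hind : IndecomposableOn r X)
    (u : V) (hu : u ∈ X) (x : V) (hx : x ∈ XuSet r X u)
    (y : V) (hy : y ∉ X ∪ XuSet r X u)
    (hdec : ¬ IndecomposableOn r (X ∪ {x, y})) :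
    IsIntervalOn r (X ∪ {x, y}) {u, x} := by
  obtain ⟨-, hxu⟩ := (mem_XuSet_iff h hu).1 hx
  refine (isIntervalOn_pair_iff h (Or.inl hu) (Or.inr (Or.inl rfl))).2 ?_
  rintro v (hv | rfl | rfl) hvu hvx
  · exact hxu v hv hvu
  · exact absurd rfl hvx
  · by_contra hsep
    exact hdec (indecomposableOn_union_pair_of_separates h hX hind hu hx hy hsep)

/-- For `u ∈ X`, `x ∈ X(u)` and `y ∈ V − (X ∪ X(u))`, if `T(X ∪ {x,y})`
is decomposable then `{u,x}` is an interval of `T(X ∪ {x,y})`. -/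
theorem Xu_extension_interval {V : Type*} [Fintype V] (r : V → V → Prop) (X : Set V)
    (h : IsTournament r) (hX : 3 ≤ X.ncard) (hind : IndecomposableOn r X)
    (u : V) (hu : u ∈ X) (x : V) (hx : x ∈ XuSet r X u)
    (y : V) (hy : y ∉ X ∪ XuSet r X u)
    (hdec : ¬ IndecomposableOn r (X ∪ {x, y})) :
    IsIntervalOn r (X ∪ {x, y}) {u, x} :=
  Xu_extension_interval_general r X h hX hind u hu x hx y hy hdec
end

section
/- For every n ≥ 5, the tournament F_{n+1} on {0,…,n} with arcs (i,j) whenever i+1 < j or i = j+1 is indecomposable, and every induced indecomposable subtournament of F_{n+1} on 5 vertices is isomorphic to W₅. -/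
/-! An interval `I` of a tournament contains every vertex `x` with `a → x → b` for some
`a, b ∈ I`. In `F_{n+1}`, the minimum `a` and maximum `b` of a nontrivial interval satisfy
`a → a-1 → b` and `a → b+1 → b`, so `0, n ∈ I`; then `0 → x → n` for `2 ≤ x ≤ n-2`, and
`2 → 1 → 0`, `n → n-1 → n-2` give the rest.

A vertex `x ∉ X` lying between two vertices of `X` splits `X` into a lower and an upper part,
and each lower vertex beats each upper one, so both parts are intervals of `X`. Hence an
indecomposable `X` with at least three vertices is a run of consecutive integers, and on five
consecutive integers `F` is `W₅` relabelled by `![1, 0, 4, 3, 2]`. -/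

theorem IsIntervalOn.mem_of_arc_of_arc {V : Type*} {r : V → V → Prop}
    (hr : ∀ x y, r x y → ¬ r y x) {X I : Set V} (hI : IsIntervalOn r X I) {a b x : V}
    (ha : a ∈ I) (hb : b ∈ I) (hx : x ∈ X) (hax : r a x) (hxb : r x b) : x ∈ I := by
  by_contra hxI
  rcases hI.2 x ⟨hx, hxI⟩ with h | h
  · exact hr a x hax (h a ha)
  · exact hr x b hxb (h b hb)

theorem IndecomposableOn.exists_eq_singleton {V : Type*} {r : V → V → Prop} {X I : Set V}
    (hX : IndecomposableOn r X) (hI : IsIntervalOn r X I) {a b : V} (ha : a ∈ I) (hb : b ∈ X)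
    (hbI : b ∉ I) : ∃ c, I = {c} := by
  rcases hX I hI with h | h | rfl
  · exact absurd ha (h ▸ Set.notMem_empty a)
  · exact h
  · exact absurd hb hbI

namespace Ft

variable {n : ℕ}

theorem asymm (x y : Fin (n+1)) : Ft n x y → ¬ Ft n y x := by
  simp only [Ft]; omega

theorem iff_of_val_eq_add {k m : ℕ} {x y : Fin (n+1)} {i j : Fin (k+1)}
    (hx : x.val = m + i.val) (hy : y.val = m + j.val) : Ft n x y ↔ Ft k i j := by
  simp only [Ft]; omega

theorem indecomposableOn_univ (hn : 4 ≤ n) : IndecomposableOn (Ft n) Set.univ := by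
  intro I hI
  rcases I.subsingleton_or_nontrivial with hI1 | hI2
  · rcases hI1.eq_empty_or_singleton with h | h
    · exact Or.inl h
    · exact Or.inr (Or.inl h)
  have mem {a b x : Fin (n+1)} (ha : a ∈ I) (hb : b ∈ I) (hax : Ft n a x) (hxb : Ft n x b) :
      x ∈ I := hI.mem_of_arc_of_arc asymm ha hb trivial hax hxb
  obtain ⟨a, ha, hmin⟩ := Set.exists_min_image I id I.toFinite hI2.nonempty
  obtain ⟨b, hb, hmax⟩ := Set.exists_max_image I id I.toFinite hI2.nonempty
  have hab : a < b := by
    obtain ⟨p, hp, q, hq, hpq⟩ := hI2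
    refine lt_of_le_of_ne (hmin b hb) fun h => hpq ?_
    exact le_antisymm ((hmax p hp).trans (h ▸ hmin q hq)) ((hmax q hq).trans (h ▸ hmin p hp))
  rw [Fin.lt_def] at hab
  have ha0 : a.val = 0 := by
    by_contra h
    have := hmin _ (mem (x := ⟨a.val - 1, by omega⟩) ha hb (by simp only [Ft]; omega)
      (by simp only [Ft]; omega))
    simp only [id, Fin.le_def] at this
    omega
  have hbn : b.val = n := by
    by_contra h
    have := hmax _ (mem (x := ⟨b.val + 1, by omega⟩) ha hb (by simp only [Ft]; omega)
      (Or.inr rfl))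
    simp only [id, Fin.le_def] at this
    omega
  have hmid (x : Fin (n+1)) (h2 : 2 ≤ x.val) (hx : x.val ≤ n - 2) : x ∈ I :=
    mem ha hb (by simp only [Ft]; omega) (by simp only [Ft]; omega)
  refine Or.inr (Or.inr (Set.eq_univ_of_forall fun x => ?_))
  by_cases h2 : 2 ≤ x.val <;> by_cases hx : x.val ≤ n - 2
  · exact hmid x h2 hx
  · by_cases hxn : x = b
    · exact hxn ▸ hb
    · have := x.isLt
      rw [Fin.ext_iff] at hxn
      exact mem hb (hmid ⟨n - 2, by omega⟩ (by simp only; omega) le_rfl)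
        (by simp only [Ft]; omega) (by simp only [Ft]; omega)
  · by_cases hx0 : x = a
    · exact hx0 ▸ ha
    · rw [Fin.ext_iff] at hx0
      exact mem (hmid ⟨2, by omega⟩ le_rfl (by simp only; omega)) ha
        (by simp only [Ft]; omega) (by simp only [Ft]; omega)
  · omega

theorem isIntervalOn_lt {X : Set (Fin (n+1))} {x : Fin (n+1)} (hx : x ∉ X) :
    IsIntervalOn (Ft n) X {y ∈ X | y < x} := by
  refine ⟨Set.sep_subset X _, fun z ⟨hzX, hz⟩ => Or.inr fun y ⟨_, hy⟩ => Or.inl ?_⟩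
  have : x ≠ z := fun h => hx (h ▸ hzX)
  simp only [Set.mem_ofPred_eq, hzX, true_and, not_lt, Fin.lt_def, ne_eq,
    Fin.ext_iff] at hz hy this
  omega

theorem isIntervalOn_gt {X : Set (Fin (n+1))} {x : Fin (n+1)} (hx : x ∉ X) :
    IsIntervalOn (Ft n) X {y ∈ X | x < y} := by
  refine ⟨Set.sep_subset X _, fun z ⟨hzX, hz⟩ => Or.inl fun y ⟨_, hy⟩ => Or.inl ?_⟩
  have : x ≠ z := fun h => hx (h ▸ hzX)
  simp only [Set.mem_ofPred_eq, hzX, true_and, not_lt, Fin.lt_def, ne_eq,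
    Fin.ext_iff] at hz hy this
  omega

theorem ordConnected_of_indecomposableOn {X : Set (Fin (n+1))}
    (hX : IndecomposableOn (Ft n) X) (hX3 : 2 < X.ncard) : X.OrdConnected := by
  refine ⟨fun a ha b hb x ⟨hax, hxb⟩ => ?_⟩
  by_contra hx
  have hax : a < x := lt_of_le_of_ne hax fun h => hx (h ▸ ha)
  have hxb : x < b := lt_of_le_of_ne hxb fun h => hx (h ▸ hb)
  obtain ⟨c, hc⟩ := hX.exists_eq_singleton (isIntervalOn_lt hx) ⟨ha, hax⟩ hb
    fun h => lt_asymm hxb h.2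
  obtain ⟨d, hd⟩ := hX.exists_eq_singleton (isIntervalOn_gt hx) ⟨hb, hxb⟩ ha
    fun h => lt_asymm hax h.2
  have hsub : X ⊆ {c, d} := fun y hy => by
    rcases lt_or_gt_of_ne (fun h : y = x => hx (h ▸ hy)) with h | h
    · exact Or.inl (hc ▸ ⟨hy, h⟩ : y ∈ ({c} : Set _))
    · exact Or.inr (hd ▸ ⟨hy, h⟩ : y ∈ ({d} : Set _))
  have := (Set.ncard_le_ncard hsub).trans (Set.ncard_insert_le c {d})
  rw [Set.ncard_singleton] at this
  omega

end Ft

theorem Set.OrdConnected.exists_eq_Icc_of_ncard_eq {n k : ℕ} {X : Set (Fin (n+1))}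
    (hX : X.OrdConnected) (hk : X.ncard = k + 1) :
    ∃ a b : Fin (n+1), X = Set.Icc a b ∧ b.val = a.val + k := by
  have hne : X.Nonempty := Set.nonempty_of_ncard_ne_zero (by omega)
  obtain ⟨a, ha, hmin⟩ := Set.exists_min_image X id X.toFinite hne
  obtain ⟨b, hb, hmax⟩ := Set.exists_max_image X id X.toFinite hne
  have hX_eq : X = Set.Icc a b :=
    Set.Subset.antisymm (fun x hx => ⟨hmin x hx, hmax x hx⟩) (hX.out ha hb)
  have hab : a ≤ b := hmin b hb
  refine ⟨a, b, hX_eq, ?_⟩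
  rw [hX_eq, ← Finset.coe_Icc, Set.ncard_coe_finset, Fin.card_Icc] at hk
  rw [Fin.le_def] at hab
  omega

def w5ToF5 : Fin 5 → Fin 5 := ![1, 0, 4, 3, 2]

theorem w5ToF5_involutive : Function.Involutive w5ToF5 := by
  unfold Function.Involutive
  decide

theorem Wt_two_iff_Ft_four (i j : Fin 5) : Wt 2 i j ↔ Ft 4 (w5ToF5 i) (w5ToF5 j) := by
  revert i j
  unfold Wt Ft
  decide

theorem Ft.exists_Wt_two_iso_Icc {n : ℕ} {a b : Fin (n+1)} (hab : b.val = a.val + 4) :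
    ∃ f : Fin (2*2+1) → Fin (n+1), Function.Injective f ∧ Set.range f = Set.Icc a b ∧
      ∀ i j, Wt 2 i j ↔ Ft n (f i) (f j) := by
  have hb := b.isLt
  let f (i : Fin 5) : Fin (n+1) := ⟨a.val + (w5ToF5 i).val, by omega⟩
  refine ⟨f, fun i j h => w5ToF5_involutive.injective (Fin.ext ?_), ?_,
    fun i j => (Wt_two_iff_Ft_four i j).trans (Ft.iff_of_val_eq_add rfl rfl).symm⟩
  · simpa [f, Fin.ext_iff] using h
  · ext y
    simp only [Set.mem_range, Set.mem_Icc, Fin.le_def, Fin.ext_iff, f]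
    constructor
    · rintro ⟨i, hi⟩
      have := (w5ToF5 i).isLt
      omega
    · rintro ⟨hay, hyb⟩
      refine ⟨w5ToF5 ⟨y.val - a.val, by omega⟩, ?_⟩
      rw [w5ToF5_involutive]
      simp only
      omega

/-- For `n ≥ 5`, `F_{n+1}` is indecomposable and every indecomposable
induced subtournament of `F_{n+1}` on 5 vertices is isomorphic to `W₅`. -/
theorem Ft_indecomposable_sub5_W5 (n : ℕ) (hn : 5 ≤ n) :
    IndecomposableOn (Ft n) Set.univ ∧
      ∀ X : Set (Fin (n+1)), X.ncard = 5 → IndecomposableOn (Ft n) X →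
        ∃ f : Fin (2*2+1) → Fin (n+1), Function.Injective f ∧ Set.range f = X ∧
          ∀ a b, Wt 2 a b ↔ Ft n (f a) (f b) := by
  refine ⟨Ft.indecomposableOn_univ (by omega), fun X hX5 hX => ?_⟩
  obtain ⟨a, b, rfl, hab⟩ :=
    (Ft.ordConnected_of_indecomposableOn hX (by omega)).exists_eq_Icc_of_ncard_eq hX5
  exact Ft.exists_Wt_two_iso_Icc hab
end
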